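/- For odd n, there is an isomorphism of S_n-lattices Sym²(A_{n-1}) ⊕ U_n ⊕ Z ≅ W_n ⊕ U_n ⊕ Z, where U_n is the standard rank-n permutation lattice, A_{n-1} its augmentation kernel, W_n = Z[P₂({1,...,n})] the permutation lattice on 2-subsets, and Z the trivial lattice. -/

import Mathlib

open Function

section Core
variable (G : Type) [Group G]

/-- A map is `G`-equivariant. -/
def IsEquivMapP {M N : Type} [AddCommGroup M] [AddCommGroup N]
    [DistribMulAction G M] [DistribMulAction G N] (f : M → N) : Prop :=
  ∀ (g : G) (m : M), f (g • m) = g • f m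

/-- `M` is a permutation `G`-lattice: it has a finite `ℤ`-basis permuted by `G`. -/
def IsPermLat (M : Type) [AddCommGroup M] [DistribMulAction G M] : Prop :=
  ∃ (ι : Type) (_ : Fintype ι) (b : Module.Basis ι ℤ M) (σ : G → ι → ι),
    ∀ (g : G) (i : ι), g • (b i : M) = b (σ g i)

/-- `M` is a lattice: finitely generated and free over `ℤ`. -/
def IsLat (M : Type) [AddCommGroup M] : Prop := Module.Free ℤ M ∧ Module.Finite ℤ M

/-- A short exact sequence `0 → M → E → P → 0` of `G`-modules. -/
def ShortExactG (M E P : Type) [AddCommGroup M] [AddCommGroup E] [AddCommGroup P]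
    [DistribMulAction G M] [DistribMulAction G E] [DistribMulAction G P] : Prop :=
  ∃ (i : M →+ E) (p : E →+ P), IsEquivMapP G i ∧ IsEquivMapP G p ∧
    Injective i ∧ Surjective p ∧ i.range = p.ker

/-- Colliot-Thélène–Sansuc equivalence of `G`-lattices. -/
def LatEquiv (M N : Type) [AddCommGroup M] [AddCommGroup N]
    [DistribMulAction G M] [DistribMulAction G N] : Prop :=
  ∃ (E : Type) (_ : AddCommGroup E) (_ : DistribMulAction G E)
    (P : Type) (_ : AddCommGroup P) (_ : DistribMulAction G P)
    (Q : Type) (_ : AddCommGroup Q) (_ : DistribMulAction G Q),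
    IsLat E ∧ IsPermLat G P ∧ IsPermLat G Q ∧
    ShortExactG G M E P ∧ ShortExactG G N E Q

/-- `M` is stably permutation. -/
def IsStablyPerm (M : Type) [AddCommGroup M] [DistribMulAction G M] : Prop :=
  ∃ (P : Type) (_ : AddCommGroup P) (_ : DistribMulAction G P)
    (Q : Type) (_ : AddCommGroup Q) (_ : DistribMulAction G Q),
    IsPermLat G P ∧ IsPermLat G Q ∧
    ∃ e : (M × P) ≃+ Q, IsEquivMapP G e

/-- `M` is permutation projective: a direct summand of a permutation lattice. -/
def IsPermProj (M : Type) [AddCommGroup M] [DistribMulAction G M] : Prop :=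
  ∃ (P : Type) (_ : AddCommGroup P) (_ : DistribMulAction G P), IsPermLat G P ∧
    ∃ (i : M →+ P) (r : P →+ M), IsEquivMapP G i ∧ IsEquivMapP G r ∧ ∀ m, r (i m) = m

/-- `M` is quasi-permutation: it embeds into a permutation lattice with permutation quotient. -/
def IsQuasiPerm (M : Type) [AddCommGroup M] [DistribMulAction G M] : Prop :=
  ∃ (P : Type) (_ : AddCommGroup P) (_ : DistribMulAction G P)
    (Q : Type) (_ : AddCommGroup Q) (_ : DistribMulAction G Q),
    IsPermLat G P ∧ IsPermLat G Q ∧ ShortExactG G M P Q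

variable (M : Type) [AddCommGroup M] [DistribMulAction G M]

/-- 1-cocycles. -/
def Z1 : AddSubgroup (G → M) where
  carrier := {f | ∀ g h : G, f (g * h) = g • f h + f g}
  zero_mem' := by intro g h; simp
  add_mem' := by
    intro f f' hf hf' g h
    simp only [Pi.add_apply, hf g h, hf' g h, smul_add]; abel
  neg_mem' := by
    intro f hf g h
    simp only [Pi.neg_apply, hf g h, smul_neg]; abel

/-- The coboundary homomorphism. -/
def coboundHom : M →+ Z1 G M where
  toFun m := ⟨fun g => g • m - m, by intro g h; simp only [mul_smul, smul_sub]; abel⟩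
  map_zero' := by apply Subtype.ext; funext g; simp
  map_add' := by
    intro a b; apply Subtype.ext; funext g
    show g • (a + b) - (a + b) = (g • a - a) + (g • b - b)
    simp only [smul_add]; abel

/-- 1-coboundaries. -/
def B1 : AddSubgroup (Z1 G M) := (coboundHom G M).range

/-- First group cohomology `H¹(G, M)`. -/
abbrev H1 := Z1 G M ⧸ B1 G M

/-- Restriction of cocycles to a subgroup. -/
def resZ1 (H : Subgroup G) : Z1 G M →+ Z1 H M where
  toFun f := ⟨fun h => f.1 h, by
    intro a b
    have := f.2 (a : G) (b : G)
    exact this⟩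
  map_zero' := rfl
  map_add' := fun _ _ => rfl

/-- Restriction on `H¹`. -/
def resH1 (H : Subgroup G) : H1 G M →+ H1 H M :=
  QuotientAddGroup.map _ _ (resZ1 G M H) (by
    rintro _ ⟨m, rfl⟩
    exact ⟨m, Subtype.ext rfl⟩)

/-- `Ш¹(G, M)`. -/
def Sha1 : AddSubgroup (H1 G M) :=
  ⨅ g : G, (resH1 G M (Subgroup.zpowers g)).ker

/-- `M` is coflasque: `H¹(H, M) = 0` for all subgroups `H ≤ G`. -/
def IsCoflasque : Prop := ∀ H : Subgroup G, ∀ x y : H1 H M, x = y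

end Core

section Core2
variable (G : Type) [Group G] (M : Type) [AddCommGroup M] [DistribMulAction G M]

/-- 2-cocycles. -/
def Z2 : AddSubgroup (G → G → M) where
  carrier := {f | ∀ g h k : G, g • f h k - f (g * h) k + f g (h * k) - f g h = 0}
  zero_mem' := by intro g h k; simp
  add_mem' := by
    intro f f' hf hf' g h k
    have h1 := hf g h k; have h2 := hf' g h k
    simp only [Pi.add_apply, smul_add]
    calc g • f h k + g • f' h k - (f (g * h) k + f' (g * h) k) +
          (f g (h * k) + f' g (h * k)) - (f g h + f' g h)
        = (g • f h k - f (g * h) k + f g (h * k) - f g h) +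
          (g • f' h k - f' (g * h) k + f' g (h * k) - f' g h) := by abel
      _ = 0 := by rw [h1, h2, add_zero]
  neg_mem' := by
    intro f hf g h k
    have h1 := hf g h k
    simp only [Pi.neg_apply, smul_neg]
    calc -(g • f h k) - -f (g * h) k + -f g (h * k) - -f g h
        = -(g • f h k - f (g * h) k + f g (h * k) - f g h) := by abel
      _ = 0 := by rw [h1, neg_zero]

/-- The 2-coboundary homomorphism. -/
def cobound2Hom : (G → M) →+ Z2 G M where
  toFun u := ⟨fun g h => g • u h - u (g * h) + u g, by
    intro g h k
    simp only [mul_smul, smul_sub, smul_add, mul_assoc]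
    abel⟩
  map_zero' := by apply Subtype.ext; funext g h; simp
  map_add' := by
    intro a b; apply Subtype.ext; funext g h
    show g • (a h + b h) - (a (g * h) + b (g * h)) + (a g + b g)
        = (g • a h - a (g * h) + a g) + (g • b h - b (g * h) + b g)
    simp only [smul_add]; abel

/-- 2-coboundaries. -/
def B2 : AddSubgroup (Z2 G M) := (cobound2Hom G M).range

/-- Second group cohomology `H²(G, M)`. -/
abbrev H2 := Z2 G M ⧸ B2 G M

/-- Restriction of 2-cocycles to a subgroup. -/
def resZ2 (H : Subgroup G) : Z2 G M →+ Z2 H M where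
  toFun f := ⟨fun a b => f.1 a b, by
    intro a b c
    have := f.2 (a : G) (b : G) (c : G)
    exact this⟩
  map_zero' := rfl
  map_add' := fun _ _ => rfl

/-- Restriction on `H²`. -/
def resH2 (H : Subgroup G) : H2 G M →+ H2 H M :=
  QuotientAddGroup.map _ _ (resZ2 G M H) (by
    rintro _ ⟨u, rfl⟩
    exact ⟨fun h : H => u (h : G), Subtype.ext rfl⟩)

/-- `Ш²(G, M)`. -/
def Sha2 : AddSubgroup (H2 G M) :=
  ⨅ g : G, (resH2 G M (Subgroup.zpowers g)).ker

/-- The subgroup `2M`. -/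
def twoSub : AddSubgroup M :=
  (AddMonoidHom.mk' (fun m : M => (2 : ℤ) • m) (by
    intro a b
    show (2 : ℤ) • (a + b) = (2 : ℤ) • a + (2 : ℤ) • b
    rw [smul_add])).range

/-- `M/2M`. -/
abbrev ModTwo := M ⧸ twoSub M

noncomputable instance : SMul G (ModTwo M) :=
  ⟨fun g => QuotientAddGroup.map _ _ (DistribMulAction.toAddMonoidHom M g) (by
    rintro _ ⟨m, rfl⟩
    refine ⟨g • m, ?_⟩
    show (2 : ℤ) • (g • m) = g • ((2 : ℤ) • m)
    rw [smul_comm])⟩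

theorem modTwo_smul_mk (g : G) (m : M) :
    g • (QuotientAddGroup.mk m : ModTwo M) = QuotientAddGroup.mk (g • m) := rfl

noncomputable instance : DistribMulAction G (ModTwo M) where
  one_smul x := by
    obtain ⟨m, rfl⟩ := QuotientAddGroup.mk_surjective x
    rw [modTwo_smul_mk, one_smul]
  mul_smul g h x := by
    obtain ⟨m, rfl⟩ := QuotientAddGroup.mk_surjective x
    rw [modTwo_smul_mk, modTwo_smul_mk, modTwo_smul_mk, mul_smul]
  smul_zero g := map_zero (QuotientAddGroup.map _ _ (DistribMulAction.toAddMonoidHom M g) _)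
  smul_add g x y := map_add (QuotientAddGroup.map _ _ (DistribMulAction.toAddMonoidHom M g) _) x y

variable [Finite G]

/-- Kernel of the norm map (for a finite group). -/
def normKer : AddSubgroup M where
  carrier := {x | ∑ᶠ g : G, g • x = 0}
  zero_mem' := by simp
  add_mem' := by
    intro x y hx hy
    have hx' : ∑ᶠ g : G, g • x = 0 := hx
    have hy' : ∑ᶠ g : G, g • y = 0 := hy
    show ∑ᶠ g : G, g • (x + y) = 0
    simp only [smul_add]
    rw [finsum_add_distrib (Set.toFinite _) (Set.toFinite _), hx', hy', add_zero]
  neg_mem' := by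
    intro x hx
    have hx' : ∑ᶠ g : G, g • x = 0 := hx
    show ∑ᶠ g : G, g • (-x) = 0
    simp only [smul_neg]
    rw [finsum_neg_distrib, hx', neg_zero]

/-- The subgroup generated by elements `g • m - m`. -/
def augSub : AddSubgroup M := AddSubgroup.closure {x | ∃ (g : G) (m : M), x = g • m - m}

/-- Tate cohomology `Ĥ⁻¹(G, M)` (for a finite group `G`). -/
abbrev TateNeg1 := normKer G M ⧸ ((augSub G M).addSubgroupOf (normKer G M))

/-- `M` is flasque: `Ĥ⁻¹(H, M) = 0` for all subgroups `H ≤ G`. -/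
def IsFlasque : Prop := ∀ H : Subgroup G, ∀ x y : TateNeg1 H M, x = y

end Core2

section Core3
variable (G : Type) [Group G]

/-- `M` is equivalent to a direct summand of a quasi-permutation `G`-lattice. -/
def IsEquivSummandQP (M : Type) [AddCommGroup M] [DistribMulAction G M] : Prop :=
  ∃ (S : Type) (_ : AddCommGroup S) (_ : DistribMulAction G S)
    (D : Type) (_ : AddCommGroup D) (_ : DistribMulAction G D)
    (D' : Type) (_ : AddCommGroup D') (_ : DistribMulAction G D'),
    IsLat S ∧ IsQuasiPerm G S ∧ (∃ e : (D × D') ≃+ S, IsEquivMapP G e) ∧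
    LatEquiv G M D

end Core3

section Tensor
open TensorProduct
variable (G : Type) [Group G] (M : Type) [AddCommGroup M] [DistribMulAction G M]

/-- The action of `g : G` as a `ℤ`-linear map. -/
def gLin (g : G) : M →ₗ[ℤ] M := (DistribMulAction.toAddMonoidHom M g).toIntLinearMap

noncomputable instance tensorSMul : SMul G (M ⊗[ℤ] M) :=
  ⟨fun g => TensorProduct.map (gLin G M g) (gLin G M g)⟩

theorem tsmul_def (g : G) (x : M ⊗[ℤ] M) :
    g • x = TensorProduct.map (gLin G M g) (gLin G M g) x := rfl

theorem gLin_one : gLin G M 1 = LinearMap.id := by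
  ext m; show (1 : G) • m = m; rw [one_smul]

theorem gLin_mul (g h : G) : gLin G M (g * h) = (gLin G M g).comp (gLin G M h) := by
  ext m; show (g * h) • m = g • h • m; rw [mul_smul]

noncomputable instance tensorAct : DistribMulAction G (M ⊗[ℤ] M) where
  one_smul x := by rw [tsmul_def, gLin_one, TensorProduct.map_id]; rfl
  mul_smul g h x := by
    rw [tsmul_def, tsmul_def, tsmul_def, gLin_mul, TensorProduct.map_comp]; rfl
  smul_zero g := map_zero _
  smul_add g x y := map_add _ x y

/-- Generators of the symmetric relation. -/
def symSpan : @Submodule ℤ (M ⊗[ℤ] M) _ _ TensorProduct.instModule :=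
  Submodule.span ℤ {x | ∃ a b : M, x = a ⊗ₜ[ℤ] b - b ⊗ₜ[ℤ] a}

/-- Generators of the wedge relation. -/
def wedSpan : @Submodule ℤ (M ⊗[ℤ] M) _ _ TensorProduct.instModule :=
  Submodule.span ℤ {x | ∃ a : M, x = a ⊗ₜ[ℤ] a}

/-- The second symmetric power `Sym²M`. -/
abbrev Sym2Q := (M ⊗[ℤ] M) ⧸ symSpan M

/-- The second exterior power `∧²M`. -/
abbrev Wedge2Q := (M ⊗[ℤ] M) ⧸ wedSpan M

theorem symSpan_le_comap (g : G) :
    symSpan M ≤ (symSpan M).comap (TensorProduct.map (gLin G M g) (gLin G M g)) := by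
  rw [← Submodule.map_le_iff_le_comap, symSpan, Submodule.map_span]
  refine Submodule.span_le.2 ?_
  rintro _ ⟨_, ⟨a, b, rfl⟩, rfl⟩
  refine Submodule.subset_span ?_
  exact ⟨g • a, g • b, by simp [TensorProduct.map_tmul]; rfl⟩

theorem wedSpan_le_comap (g : G) :
    wedSpan M ≤ (wedSpan M).comap (TensorProduct.map (gLin G M g) (gLin G M g)) := by
  rw [← Submodule.map_le_iff_le_comap, wedSpan, Submodule.map_span]
  refine Submodule.span_le.2 ?_
  rintro _ ⟨_, ⟨a, rfl⟩, rfl⟩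
  exact Submodule.subset_span ⟨g • a, by simp [TensorProduct.map_tmul]; rfl⟩

noncomputable instance sym2SMul : SMul G (Sym2Q M) :=
  ⟨fun g => Submodule.mapQ _ _ (TensorProduct.map (gLin G M g) (gLin G M g))
    (symSpan_le_comap G M g)⟩

noncomputable instance wedge2SMul : SMul G (Wedge2Q M) :=
  ⟨fun g => Submodule.mapQ _ _ (TensorProduct.map (gLin G M g) (gLin G M g))
    (wedSpan_le_comap G M g)⟩

theorem sym2_smul_mk (g : G) (x : M ⊗[ℤ] M) :
    g • ((symSpan M).mkQ x) = (symSpan M).mkQ (g • x) :=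
  Submodule.mapQ_apply _ _ _ _

theorem wedge2_smul_mk (g : G) (x : M ⊗[ℤ] M) :
    g • ((wedSpan M).mkQ x) = (wedSpan M).mkQ (g • x) :=
  Submodule.mapQ_apply _ _ _ _

noncomputable instance sym2Act : DistribMulAction G (Sym2Q M) where
  one_smul x := by
    obtain ⟨y, rfl⟩ := (symSpan M).mkQ_surjective x
    rw [sym2_smul_mk, one_smul]
  mul_smul g h x := by
    obtain ⟨y, rfl⟩ := (symSpan M).mkQ_surjective x
    rw [sym2_smul_mk, sym2_smul_mk, sym2_smul_mk, mul_smul]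
  smul_zero g := map_zero (Submodule.mapQ _ _ _ (symSpan_le_comap G M g))
  smul_add g x y := map_add (Submodule.mapQ _ _ _ (symSpan_le_comap G M g)) x y

noncomputable instance wedge2Act : DistribMulAction G (Wedge2Q M) where
  one_smul x := by
    obtain ⟨y, rfl⟩ := (wedSpan M).mkQ_surjective x
    rw [wedge2_smul_mk, one_smul]
  mul_smul g h x := by
    obtain ⟨y, rfl⟩ := (wedSpan M).mkQ_surjective x
    rw [wedge2_smul_mk, wedge2_smul_mk, wedge2_smul_mk, mul_smul]
  smul_zero g := map_zero (Submodule.mapQ _ _ _ (wedSpan_le_comap G M g))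
  smul_add g x y := map_add (Submodule.mapQ _ _ _ (wedSpan_le_comap G M g)) x y

variable {M} {N : Type} [AddCommGroup N]

/-- The map `Sym²f` induced by a linear map `f`. -/
noncomputable def sym2Map (f : M →ₗ[ℤ] N) : Sym2Q M →ₗ[ℤ] Sym2Q N :=
  Submodule.mapQ _ _ (TensorProduct.map f f) (by
    rw [← Submodule.map_le_iff_le_comap, symSpan, Submodule.map_span]
    refine Submodule.span_le.2 ?_
    rintro _ ⟨_, ⟨a, b, rfl⟩, rfl⟩
    exact Submodule.subset_span ⟨f a, f b, by simp [TensorProduct.map_tmul]⟩)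

/-- The map `∧²f` induced by a linear map `f`. -/
noncomputable def wedge2Map (f : M →ₗ[ℤ] N) : Wedge2Q M →ₗ[ℤ] Wedge2Q N :=
  Submodule.mapQ _ _ (TensorProduct.map f f) (by
    rw [← Submodule.map_le_iff_le_comap, wedSpan, Submodule.map_span]
    refine Submodule.span_le.2 ?_
    rintro _ ⟨_, ⟨a, rfl⟩, rfl⟩
    exact Submodule.subset_span ⟨f a, by simp [TensorProduct.map_tmul]⟩)

end Tensor

section PermMod
variable (G : Type) [Group G] (X : Type) [MulAction G X]

/-- The permutation action on `ℤ[X] = X → ℤ`. -/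
instance permSMul : SMul G (X → ℤ) := ⟨fun g f x => f (g⁻¹ • x)⟩

theorem perm_smul_def (g : G) (f : X → ℤ) (x : X) : (g • f) x = f (g⁻¹ • x) := rfl

instance permAct : DistribMulAction G (X → ℤ) where
  one_smul f := funext fun x => by rw [perm_smul_def, inv_one, one_smul]
  mul_smul g h f := funext fun x => by
    rw [perm_smul_def, perm_smul_def, perm_smul_def, mul_inv_rev, mul_smul]
  smul_zero g := rfl
  smul_add g f f' := rfl

variable [Fintype X]

/-- The augmentation kernel `A = ker(ℤ[X] → ℤ)`. -/
def augKer : AddSubgroup (X → ℤ) where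
  carrier := {f | ∑ x, f x = 0}
  zero_mem' := by simp
  add_mem' := by
    intro a b ha hb
    have ha' : ∑ x, a x = 0 := ha
    have hb' : ∑ x, b x = 0 := hb
    show ∑ x, (a x + b x) = 0
    rw [Finset.sum_add_distrib, ha', hb', add_zero]
  neg_mem' := by
    intro a ha
    have ha' : ∑ x, a x = 0 := ha
    show ∑ x, (-(a x)) = 0
    rw [Finset.sum_neg_distrib, ha', neg_zero]

theorem smul_mem_augKer (g : G) (f : X → ℤ) (hf : f ∈ augKer X) :
    g • f ∈ augKer X := by
  have hf' : ∑ x, f x = 0 := hf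
  show ∑ x, f (g⁻¹ • x) = 0
  exact (Equiv.sum_comp (MulAction.toPerm (g⁻¹ : G)) f).trans hf'

instance augKerSMul : SMul G (augKer X) :=
  ⟨fun g f => ⟨g • (f : X → ℤ), smul_mem_augKer G X g f f.2⟩⟩

theorem augKer_smul_def (g : G) (f : augKer X) :
    ((g • f : augKer X) : X → ℤ) = g • (f : X → ℤ) := rfl

instance augKerAct : DistribMulAction G (augKer X) where
  one_smul f := Subtype.ext (by rw [augKer_smul_def, one_smul])
  mul_smul g h f := Subtype.ext (by
    rw [augKer_smul_def, augKer_smul_def, augKer_smul_def, mul_smul])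
  smul_zero g := Subtype.ext (by
    rw [augKer_smul_def]
    show g • (0 : X → ℤ) = 0
    rw [smul_zero])
  smul_add g f f' := Subtype.ext (by
    show g • ((f : X → ℤ) + f') = g • (f : X → ℤ) + g • (f' : X → ℤ)
    rw [smul_add])

end PermMod

section P2sec
variable (G : Type) [Group G]

/-- The set of 2-element subsets of `X`. -/
def P2 (X : Type) [DecidableEq X] : Type := {s : Finset X // s.card = 2}

noncomputable instance (X : Type) [DecidableEq X] [Fintype X] : Fintype (P2 X) := by
  unfold P2; infer_instance

instance p2SMul (X : Type) [DecidableEq X] [MulAction G X] : SMul G (P2 X) :=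
  ⟨fun g s => ⟨s.1.image (fun x => g • x), by
    rw [Finset.card_image_of_injective _ (MulAction.injective g)]; exact s.2⟩⟩

theorem p2_smul_def (X : Type) [DecidableEq X] [MulAction G X] (g : G) (s : P2 X) :
    (g • s).1 = s.1.image (fun x => g • x) := rfl

instance p2Act (X : Type) [DecidableEq X] [MulAction G X] : MulAction G (P2 X) where
  one_smul s := Subtype.ext (by
    rw [p2_smul_def]
    simp)
  mul_smul g h s := Subtype.ext (by
    simp only [p2_smul_def, Finset.image_image]
    refine Finset.image_congr ?_
    intro x _
    exact mul_smul g h x)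

end P2sec

/-- The root lattice `A_{n-1}` as an `S_n`-lattice. -/
abbrev rootLat (n : ℕ) := augKer (Fin n)

/-!
Identify `Sym² U ≅ W ⊕ U` (`U = ℤⁿ` with basis `e_i`) by `e_i e_j ↦ e_{ij}` for `i ≠ j` and
`e_i² ↦ e_i`, so that `Sym² A ⊆ W ⊕ U`. For `n = 2m + 1` the map
`(s, u, z) ↦ (s + u·𝟙 + (z𝟙 - m u), ∑ uᵢ + 2z)`, where `𝟙 = ∑ e_i` and `z𝟙 - m u` lies in the
summand `U`, is `Sₙ`-equivariant. It is onto because the basis vectors have explicit preimages;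
this is where `n - 2m = 1` enters. Both sides are generated by `n(n-1)/2 + n + 1` elements (for
`Sym² A`, the products of the roots `e_i - e_0`) and the target is free of that rank, so the
surjection is injective: a surjective endomorphism of `ℤ^N` is injective.
-/

open Submodule TensorProduct

theorem injective_of_surjective_of_span_eq_top {R M N κ : Type*} [CommRing R]
    [StrongRankCondition R] [AddCommGroup M] [Module R M] [AddCommGroup N] [Module R N]
    [Module.Free R N] [Module.Finite R N] [Fintype κ] {v : κ → M}
    (hv : span R (Set.range v) = ⊤) (hκ : Fintype.card κ = Module.finrank R N)
    {f : M →ₗ[R] N} (hf : Surjective f) : Injective f := by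
  have hg := (span_range_eq_top_iff_surjective_fintypeLinearCombination R v).1 hv
  let e : N ≃ₗ[R] (κ → R) := LinearEquiv.ofFinrankEq _ _ (by simp [hκ])
  have hinj := OrzechProperty.injective_of_surjective_endomorphism
    (e.toLinearMap ∘ₗ f ∘ₗ Fintype.linearCombination R v) (e.surjective.comp (hf.comp hg))
  intro x y hxy
  obtain ⟨a, rfl⟩ := hg x
  obtain ⟨b, rfl⟩ := hg y
  exact congrArg _ (hinj (by simp [hxy]))

theorem span_range_sumElim_inl_inr_eq_top {R M N ι κ : Type*} [Semiring R]
    [AddCommMonoid M] [Module R M] [AddCommMonoid N] [Module R N] {a : ι → M} {b : κ → N}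
    (ha : span R (Set.range a) = ⊤) (hb : span R (Set.range b) = ⊤) :
    span R (Set.range (Sum.elim (fun i => (a i, (0 : N))) (fun k => ((0 : M), b k)))) = ⊤ := by
  have hrange : Set.range (Sum.elim (fun i => (a i, (0 : N))) (fun k => ((0 : M), b k))) =
      LinearMap.inl R M N '' Set.range a ∪ LinearMap.inr R M N '' Set.range b := by
    rw [Set.Sum.elim_range, ← Set.range_comp, ← Set.range_comp]
    rfl
  rw [hrange, LinearMap.span_inl_union_inr, ha, hb, Submodule.prod_top]

section Sym2Q
variable {M : Type} [AddCommGroup M]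

noncomputable def sym2Mul (a b : M) : Sym2Q M := (symSpan M).mkQ (a ⊗ₜ[ℤ] b)

theorem sym2Mul_comm (a b : M) : sym2Mul a b = sym2Mul b a :=
  (Submodule.Quotient.eq _).2 (subset_span ⟨a, b, rfl⟩)

theorem span_range_sym2Mul_eq_top {ι : Type*} {v : ι → M} (hv : span ℤ (Set.range v) = ⊤) :
    span ℤ (Set.range (Sym2.lift ⟨fun i j => sym2Mul (v i) (v j), fun _ _ => sym2Mul_comm _ _⟩))
      = ⊤ := by
  have hrange : Set.range (Sym2.lift ⟨fun i j => sym2Mul (v i) (v j), fun _ _ => sym2Mul_comm _ _⟩)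
      = (symSpan M).mkQ '' Set.image2 (fun a b => TensorProduct.mk ℤ M M a b)
          (Set.range v) (Set.range v) := by
    ext x
    simp [Sym2.exists, sym2Mul]
  rw [hrange, span_image, ← map₂_span_span, hv, map₂_mk_top_top_eq_top, Submodule.map_top,
    range_mkQ]

variable {P : Type*} [AddCommGroup P]

noncomputable def sym2Lift (B : M →ₗ[ℤ] M →ₗ[ℤ] P) (hB : ∀ a b, B a b = B b a) :
    Sym2Q M →ₗ[ℤ] P :=
  (symSpan M).liftQ (TensorProduct.lift B) (span_le.2 (by rintro _ ⟨a, b, rfl⟩; simp [hB a b]))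

theorem sym2Lift_smul {G : Type} [Group G] [DistribMulAction G M] [DistribMulAction G P]
    (B : M →ₗ[ℤ] M →ₗ[ℤ] P) (hB : ∀ a b, B a b = B b a)
    (hBG : ∀ (g : G) a b, B (g • a) (g • b) = g • B a b) (g : G) (s : Sym2Q M) :
    sym2Lift B hB (g • s) = g • sym2Lift B hB s := by
  obtain ⟨t, rfl⟩ := (symSpan M).mkQ_surjective s
  induction t using TensorProduct.induction_on with
  | zero => simp
  | tmul a b => exact hBG g a b
  | add x y hx hy => rw [map_add, smul_add, map_add, hx, hy, map_add, smul_add]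

end Sym2Q

instance instDecidableEqP2 (X : Type) [DecidableEq X] : DecidableEq (P2 X) :=
  inferInstanceAs (DecidableEq {s : Finset X // s.card = 2})

def P2.pair {X : Type} [DecidableEq X] {a b : X} (h : a ≠ b) : P2 X :=
  ⟨{a, b}, Finset.card_pair h⟩

section SymForm
variable {X : Type} [DecidableEq X]

theorem sum_smul_p2 {G : Type} [Group G] [MulAction G X] (g : G) (q : P2 X) (f : X → ℤ) :
    ∑ i ∈ (g • q).1, f i = ∑ i ∈ q.1, f (g • i) := by
  rw [p2_smul_def]
  exact Finset.sum_image fun _ _ _ _ h => MulAction.injective g h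

variable (X) in
/-- The multiplication `U × U → Sym² U` for `U = ℤ^X`, read in `W ⊕ U` via
`e_i e_j ↦ (e_{ij}, 0)` for `i ≠ j` and `e_i² ↦ (0, e_i)`. -/
def symForm : (X → ℤ) →ₗ[ℤ] (X → ℤ) →ₗ[ℤ] (P2 X → ℤ) × (X → ℤ) :=
  LinearMap.mk₂ ℤ
    (fun x y => (fun q => (∑ i ∈ q.1, x i) * (∑ i ∈ q.1, y i) - ∑ i ∈ q.1, x i * y i, x * y))
    (fun _ _ _ => by
      ext <;> simp only [Prod.fst_add, Prod.snd_add, Pi.add_apply, Pi.mul_apply, add_mul,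
        Finset.sum_add_distrib]; ring)
    (fun _ _ _ => by
      ext <;> simp only [Prod.smul_fst, Prod.smul_snd, Pi.smul_apply, smul_eq_mul, Pi.mul_apply,
        mul_assoc, ← Finset.mul_sum]; ring)
    (fun _ _ _ => by
      ext <;> simp only [Prod.fst_add, Prod.snd_add, Pi.add_apply, Pi.mul_apply, mul_add,
        Finset.sum_add_distrib]; ring)
    (fun _ _ _ => by
      ext <;> simp only [Prod.smul_fst, Prod.smul_snd, Pi.smul_apply, smul_eq_mul, Pi.mul_apply,
        mul_left_comm _ (_ : ℤ), ← Finset.mul_sum]; ring)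

theorem symForm_apply (x y : X → ℤ) :
    symForm X x y =
      (fun q => (∑ i ∈ q.1, x i) * (∑ i ∈ q.1, y i) - ∑ i ∈ q.1, x i * y i, x * y) :=
  rfl

theorem symForm_comm (x y : X → ℤ) : symForm X x y = symForm X y x := by
  simp only [symForm_apply, mul_comm]

theorem symForm_smul {G : Type} [Group G] [MulAction G X] (g : G) (x y : X → ℤ) :
    symForm X (g • x) (g • y) = g • symForm X x y := by
  ext q
  · simp [symForm_apply, perm_smul_def, sum_smul_p2]
  · simp [symForm_apply, perm_smul_def]

theorem symForm_single_self (a : X) :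
    symForm X (Pi.single a 1) (Pi.single a 1) = LinearMap.inr ℤ _ _ (Pi.single a 1) := by
  ext q
  · by_cases ha : a ∈ q.1 <;> simp [symForm_apply, Pi.single_apply, ha]
  · simp [symForm_apply, ← Pi.single_mul]

theorem symForm_single_of_ne {a b : X} (hab : a ≠ b) :
    symForm X (Pi.single a 1) (Pi.single b 1) = (Pi.single (P2.pair hab) 1, 0) := by
  ext q
  · have hq : (a ∈ q.1 ∧ b ∈ q.1) ↔ q = P2.pair hab := by
      refine ⟨fun ⟨ha, hb⟩ => Subtype.ext (Finset.eq_of_subset_of_card_le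
        (s := {a, b}) (t := q.1) ?_ ?_).symm, ?_⟩
      · simp [Finset.insert_subset_iff, ha, hb]
      · rw [q.2, Finset.card_pair hab]
      · rintro rfl
        simp [P2.pair]
    change (∑ i ∈ q.1, Pi.single a (1 : ℤ) i) * (∑ i ∈ q.1, Pi.single b (1 : ℤ) i) -
      ∑ i ∈ q.1, Pi.single a (1 : ℤ) i * Pi.single b 1 i =
        Pi.single (M := fun _ => ℤ) (P2.pair hab) 1 q
    rw [Pi.single_apply]
    simp only [← hq]
    by_cases ha : a ∈ q.1 <;> by_cases hb : b ∈ q.1 <;>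
      simp [Pi.single_apply, hab.symm, ha, hb]
  · by_cases hqa : q = a <;> simp [symForm_apply, Pi.single_apply, hqa, hab]

theorem sum_single_one [Fintype X] : ∑ i, Pi.single i (1 : ℤ) = (1 : X → ℤ) :=
  Finset.univ_sum_single 1

theorem sum_symForm_single_left [Fintype X] (y : X → ℤ) :
    ∑ k, symForm X (Pi.single k 1) y = symForm X 1 y := by
  rw [← LinearMap.sum_apply, ← map_sum, sum_single_one]

theorem sum_symForm_single_right [Fintype X] (x : X → ℤ) :
    ∑ k, symForm X x (Pi.single k 1) = symForm X x 1 := by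
  rw [← map_sum, sum_single_one]

end SymForm

section Root
variable {n : ℕ}

def root (a b : Fin n) : rootLat n :=
  ⟨Pi.single a 1 - Pi.single b 1, by
    change ∑ i, (Pi.single a 1 - Pi.single b 1 : Fin n → ℤ) i = 0
    simp [Finset.sum_sub_distrib]⟩

theorem coe_root (a b : Fin n) :
    (root a b : Fin n → ℤ) = Pi.single a 1 - Pi.single b 1 :=
  rfl

theorem span_range_root_succ_zero (k : ℕ) :
    span ℤ (Set.range fun i : Fin k => root i.succ (0 : Fin (k + 1))) = ⊤ := by
  refine eq_top_iff.2 fun a _ => ?_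
  have hsum : ∑ i, (a : Fin (k + 1) → ℤ) i = 0 := a.2
  have ha : a = ∑ i : Fin k, (a : Fin (k + 1) → ℤ) i.succ • root i.succ 0 := by
    rw [Fin.sum_univ_succ] at hsum
    ext j
    cases j using Fin.cases
    · simp [coe_root]
      linarith
    · simp [coe_root, Pi.single_apply]
  rw [ha]
  exact sum_mem fun i _ => smul_mem _ _ (subset_span ⟨i, rfl⟩)

variable (n) in
noncomputable def sym2Incl : Sym2Q (rootLat n) →ₗ[ℤ] (P2 (Fin n) → ℤ) × (Fin n → ℤ) :=
  sym2Lift ((symForm (Fin n)).compl₁₂ (rootLat n).subtype.toIntLinearMap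
    (rootLat n).subtype.toIntLinearMap) fun a b => symForm_comm (a : Fin n → ℤ) b

theorem sym2Incl_sym2Mul (a b : rootLat n) :
    sym2Incl n (sym2Mul a b) = symForm (Fin n) a b := by
  rfl

theorem sym2Incl_smul (g : Equiv.Perm (Fin n)) (s : Sym2Q (rootLat n)) :
    sym2Incl n (g • s) = g • sym2Incl n s :=
  sym2Lift_smul _ _ (fun g (a b : rootLat n) => symForm_smul g (a : Fin n → ℤ) b) g s

variable (n) in
noncomputable def sym2RootMap (m : ℤ) :
    Sym2Q (rootLat n) × (Fin n → ℤ) × ℤ →ₗ[ℤ] (P2 (Fin n) → ℤ) × (Fin n → ℤ) × ℤ where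
  toFun x :=
    let p := sym2Incl n x.1 + symForm (Fin n) x.2.1 1 +
      LinearMap.inr ℤ _ _ (x.2.2 • 1 - m • x.2.1)
    (p.1, p.2, ∑ i, x.2.1 i + 2 * x.2.2)
  map_add' x y := by
    ext <;> simp [Finset.sum_add_distrib] <;> ring
  map_smul' c x := by
    ext <;> simp [-zsmul_eq_mul, ← Finset.mul_sum] <;> ring

theorem sym2RootMap_apply (m : ℤ) (s : Sym2Q (rootLat n)) (u : Fin n → ℤ) (z : ℤ) :
    sym2RootMap n m (s, u, z) =
      let p := sym2Incl n s + symForm (Fin n) u 1 + LinearMap.inr ℤ _ _ (z • 1 - m • u)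
      (p.1, p.2, ∑ i, u i + 2 * z) :=
  rfl

theorem sym2RootMap_smul (m : ℤ) (g : Equiv.Perm (Fin n)) (s : Sym2Q (rootLat n))
    (u : Fin n → ℤ) (z : ℤ) :
    sym2RootMap n m (g • s, g • u, z) =
      (g • (sym2RootMap n m (s, u, z)).1, g • (sym2RootMap n m (s, u, z)).2.1,
        (sym2RootMap n m (s, u, z)).2.2) := by
  have hone : g • (1 : Fin n → ℤ) = 1 := rfl
  have hcore : sym2Incl n (g • s) + symForm (Fin n) (g • u) 1 +
      LinearMap.inr ℤ _ _ (z • 1 - m • g • u) =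
      g • (sym2Incl n s + symForm (Fin n) u 1 + LinearMap.inr ℤ _ _ (z • 1 - m • u)) := by
    rw [smul_add, smul_add, sym2Incl_smul, ← symForm_smul, hone, LinearMap.inr_apply,
      LinearMap.inr_apply, Prod.smul_mk g 0, smul_zero, smul_sub, smul_comm g z, smul_comm g m,
      hone]
  have hsum : ∑ i, (g • u) i = ∑ i, u i := Equiv.sum_comp g⁻¹ u
  simp only [sym2RootMap_apply, hcore, hsum, Prod.smul_fst, Prod.smul_snd]

theorem sym2RootMap_sum_sq_root {m : ℤ} (hm : (n : ℤ) = 2 * m + 1) (a : Fin n) :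
    sym2RootMap n m (∑ k, sym2Mul (root a k) (root a k), 2 • Pi.single a 1, -1) =
      (0, Pi.single a 1, 0) := by
  have hcore : sym2Incl n (∑ k, sym2Mul (root a k) (root a k)) +
      symForm (Fin n) (2 • Pi.single a 1) 1 +
      LinearMap.inr ℤ _ _ ((-1 : ℤ) • 1 - m • 2 • Pi.single a 1) =
      LinearMap.inr ℤ _ _ (Pi.single a 1) := by
    simp only [map_sum, sym2Incl_sym2Mul, coe_root, map_sub, LinearMap.sub_apply,
      Finset.sum_sub_distrib, sum_symForm_single_left, sum_symForm_single_right,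
      symForm_single_self, Finset.sum_const, Finset.card_univ, Fintype.card_fin, map_nsmul,
      map_zsmul, LinearMap.smul_apply]
    rw [← map_sum, sum_single_one, symForm_comm 1]
    linear_combination (norm := module) hm • LinearMap.inr ℤ (P2 (Fin n) → ℤ) _ (Pi.single a 1)
  simp only [sym2RootMap_apply, hcore]
  simp [← Finset.mul_sum]

theorem sym2RootMap_sum_root_mul_root {m : ℤ} (hm : (n : ℤ) = 2 * m + 1) {a b : Fin n}
    (hab : a ≠ b) :
    sym2RootMap n m (∑ k, sym2Mul (root k a) (root k b) + m • sym2Mul (root a b) (root a b),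
      Pi.single a 1 + Pi.single b 1, -1) = (Pi.single (P2.pair hab) 1, 0, 0) := by
  have hcore : sym2Incl n (∑ k, sym2Mul (root k a) (root k b) +
        m • sym2Mul (root a b) (root a b)) +
      symForm (Fin n) (Pi.single a 1 + Pi.single b 1) 1 +
      LinearMap.inr ℤ _ _ ((-1 : ℤ) • 1 - m • (Pi.single a 1 + Pi.single b 1)) =
      symForm (Fin n) (Pi.single a 1) (Pi.single b 1) := by
    simp only [map_add, map_sum, sym2Incl_sym2Mul, coe_root, map_sub, LinearMap.sub_apply,
      LinearMap.add_apply, Finset.sum_sub_distrib, sum_symForm_single_left,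
      sum_symForm_single_right, symForm_single_self, Finset.sum_const, Finset.card_univ,
      Fintype.card_fin, map_zsmul]
    rw [← map_sum, sum_single_one, symForm_comm 1, symForm_comm (Pi.single b 1) (Pi.single a 1)]
    linear_combination (norm := module) hm • symForm (Fin n) (Pi.single a 1) (Pi.single b 1)
  simp only [sym2RootMap_apply, hcore, symForm_single_of_ne hab]
  simp [Finset.sum_add_distrib]

theorem sym2RootMap_surjective {m : ℤ} (hm : (n : ℤ) = 2 * m + 1) :
    Surjective (sym2RootMap n m) := by
  let J : (P2 (Fin n) → ℤ) × (Fin n → ℤ) →ₗ[ℤ] (P2 (Fin n) → ℤ) × (Fin n → ℤ) × ℤ :=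
    (LinearMap.fst ℤ _ _).prod (LinearMap.inl ℤ _ ℤ ∘ₗ LinearMap.snd ℤ _ _)
  have hJ : LinearMap.range J ≤ LinearMap.range (sym2RootMap n m) := by
    rw [LinearMap.range_eq_map, ← span_range_sumElim_inl_inr_eq_top (Pi.basisFun ℤ _).span_eq
      (Pi.basisFun ℤ _).span_eq, Submodule.map_span_le]
    rintro _ ⟨q | a, rfl⟩
    · obtain ⟨a, b, hab, hq⟩ := Finset.card_eq_two.1 q.2
      obtain rfl : q = P2.pair hab := Subtype.ext hq
      exact ⟨_, (sym2RootMap_sum_root_mul_root hm hab).trans (by simp [J])⟩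
    · exact ⟨_, (sym2RootMap_sum_sq_root hm a).trans (by simp [J])⟩
  have : NeZero n := ⟨by omega⟩
  set P := sym2RootMap n m (0, Pi.single 0 1, 0)
  have hP : P.2.2 = 1 := by simp [P, sym2RootMap_apply]
  rintro ⟨w, v, c⟩
  have hwvc : (w, v, c) = J (w - c • P.1, v - c • P.2.1) + c • P := by
    ext <;> simp [J, hP]
  rw [hwvc]
  exact add_mem (hJ ⟨_, rfl⟩) (smul_mem _ _ ⟨_, rfl⟩)

theorem injective_of_surjective_sym2Q_rootLat {k : ℕ}
    {f : Sym2Q (rootLat (k + 1)) × (Fin (k + 1) → ℤ) × ℤ →ₗ[ℤ]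
      (P2 (Fin (k + 1)) → ℤ) × (Fin (k + 1) → ℤ) × ℤ}
    (hf : Surjective f) : Injective f := by
  refine injective_of_surjective_of_span_eq_top (span_range_sumElim_inl_inr_eq_top
    (span_range_sym2Mul_eq_top (span_range_root_succ_zero k))
    (span_range_sumElim_inl_inr_eq_top (Pi.basisFun ℤ _).span_eq
      (Module.Basis.singleton Unit ℤ).span_eq)) ?_ hf
  rw [Module.finrank_prod, Module.finrank_prod, Module.finrank_fintype_fun_eq_card,
    Module.finrank_fintype_fun_eq_card, Module.finrank_self]
  simp [Sym2.card, P2]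

end Root

theorem stmt_11 (n : ℕ) (hn : Odd n) :
    ∃ e : (Sym2Q (rootLat n) × (Fin n → ℤ) × ℤ) ≃+ ((P2 (Fin n) → ℤ) × (Fin n → ℤ) × ℤ),
      ∀ (g : Equiv.Perm (Fin n)) (s : Sym2Q (rootLat n)) (u : Fin n → ℤ) (z : ℤ),
        e (g • s, g • u, z) =
          (g • (e (s, u, z)).1, g • (e (s, u, z)).2.1, (e (s, u, z)).2.2) := by
  obtain ⟨m, rfl⟩ := hn
  have hsurj := sym2RootMap_surjective (n := 2 * m + 1) (m := m) (by push_cast; ring)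
  exact ⟨(LinearEquiv.ofBijective _
    ⟨injective_of_surjective_sym2Q_rootLat hsurj, hsurj⟩).toAddEquiv, sym2RootMap_smul m⟩
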